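/- If for some noisy function y_{t+τ} = f(x_{t+τ}, ε) the representation z_t is not sufficient, i.e., I(x_t; y_{t+τ}) > I(z_t; y_{t+τ}), then the autoinformation gap is strictly positive: I(x_t; x_{t+τ}) > I(z_t; z_{t+τ}). -/

import Mathlib

/-!
Write `z = g(x, ε₁)`, `z' = g(x', ε₂)` and `y = f(x', ε₃)`. Because each noise is independent of
everything else, the chain rule and data processing give
`I(x; x') = I(z; x') + I(x; x' | z)`, `I(x; y) = I(z; y) + I(x; y | z)`,
`I(z; z') ≤ I(z; x')` and `I(x; y | z) ≤ I(x; x' | z)`. Hence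
`I(x; x') - I(z; z') ≥ I(x; x' | z) ≥ I(x; y | z) = I(x; y) - I(z; y) > 0`.
-/

open Finset

/-- Probability mass function of a random variable `X : Ω → α` under the weight `μ`. -/
def pmfOf {Ω α : Type} [Fintype Ω] [DecidableEq α] (μ : Ω → ℝ) (X : Ω → α) (a : α) : ℝ :=
  ∑ ω ∈ Finset.univ.filter (fun ω => X ω = a), μ ω

/-- `μ` is a probability mass function on the finite sample space `Ω`. -/
def IsPMF {Ω : Type} [Fintype Ω] (μ : Ω → ℝ) : Prop :=
  (∀ ω, 0 ≤ μ ω) ∧ ∑ ω, μ ω = 1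

/-- Mutual information `I(X; Y)` of two finite-valued random variables. -/
noncomputable def mi {Ω α β : Type} [Fintype Ω] [Fintype α] [DecidableEq α]
    [Fintype β] [DecidableEq β] (μ : Ω → ℝ) (X : Ω → α) (Y : Ω → β) : ℝ :=
  ∑ a : α, ∑ b : β,
    pmfOf μ (fun ω => (X ω, Y ω)) (a, b) *
      Real.log (pmfOf μ (fun ω => (X ω, Y ω)) (a, b) / (pmfOf μ X a * pmfOf μ Y b))

/-- Conditional mutual information `I(X; Y | Z)` of finite-valued random variables. -/
noncomputable def cmi {Ω α β γ : Type} [Fintype Ω] [Fintype α] [DecidableEq α]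
    [Fintype β] [DecidableEq β] [Fintype γ] [DecidableEq γ]
    (μ : Ω → ℝ) (X : Ω → α) (Y : Ω → β) (Z : Ω → γ) : ℝ :=
  ∑ a : α, ∑ b : β, ∑ c : γ,
    pmfOf μ (fun ω => (X ω, Y ω, Z ω)) (a, b, c) *
      Real.log (pmfOf μ (fun ω => (X ω, Y ω, Z ω)) (a, b, c) * pmfOf μ Z c /
        (pmfOf μ (fun ω => (X ω, Z ω)) (a, c) * pmfOf μ (fun ω => (Y ω, Z ω)) (b, c)))

/-- Conditional pmf `P(X = a | Y = b)`. -/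
noncomputable def condPMF {Ω α β : Type} [Fintype Ω] [DecidableEq α] [DecidableEq β]
    (μ : Ω → ℝ) (X : Ω → α) (Y : Ω → β) (a : α) (b : β) : ℝ :=
  pmfOf μ (fun ω => (X ω, Y ω)) (a, b) / pmfOf μ Y b

/-- Independence of two finite-valued random variables. -/
def IndepRV {Ω α β : Type} [Fintype Ω] [Fintype α] [DecidableEq α]
    [Fintype β] [DecidableEq β] (μ : Ω → ℝ) (X : Ω → α) (Y : Ω → β) : Prop :=
  ∀ a b, pmfOf μ (fun ω => (X ω, Y ω)) (a, b) = pmfOf μ X a * pmfOf μ Y b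

section Pmf

variable {Ω α β : Type} [Fintype Ω] (μ : Ω → ℝ)

lemma pmfOf_nonneg (hμ : ∀ ω, 0 ≤ μ ω) [DecidableEq α] (X : Ω → α) (a : α) :
    0 ≤ pmfOf μ X a :=
  sum_nonneg fun ω _ => hμ ω

lemma pmfOf_congr [DecidableEq α] [DecidableEq β] {X : Ω → α} {Y : Ω → β} {a : α} {b : β}
    (h : ∀ ω, X ω = a ↔ Y ω = b) : pmfOf μ X a = pmfOf μ Y b := by
  simp only [pmfOf, h]

lemma pmfOf_swap [DecidableEq α] [DecidableEq β] (X : Ω → α) (Y : Ω → β) (a : α) (b : β) :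
    pmfOf μ (fun ω => (Y ω, X ω)) (b, a) = pmfOf μ (fun ω => (X ω, Y ω)) (a, b) :=
  pmfOf_congr μ fun ω => by simp only [Prod.mk.injEq, and_comm]

lemma pmfOf_le_pmfOf (hμ : ∀ ω, 0 ≤ μ ω) [DecidableEq α] [DecidableEq β] {X : Ω → α}
    {Y : Ω → β} {a : α} {b : β} (h : ∀ ω, X ω = a → Y ω = b) :
    pmfOf μ X a ≤ pmfOf μ Y b :=
  sum_le_sum_of_subset_of_nonneg (monotone_filter_right _ fun ω _ => h ω) fun ω _ _ => hμ ω

lemma sum_pmfOf [Fintype α] [DecidableEq α] (X : Ω → α) : ∑ a, pmfOf μ X a = ∑ ω, μ ω :=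
  sum_fiberwise univ X μ

lemma sum_pmfOf_prod_right [Fintype β] [DecidableEq α] [DecidableEq β] (X : Ω → α)
    (Y : Ω → β) (a : α) : ∑ b, pmfOf μ (fun ω => (X ω, Y ω)) (a, b) = pmfOf μ X a := by
  simp only [pmfOf, Prod.mk.injEq, ← filter_filter]
  exact sum_fiberwise _ Y μ

lemma sum_pmfOf_prod_left [Fintype α] [DecidableEq α] [DecidableEq β] (X : Ω → α)
    (Y : Ω → β) (b : β) : ∑ a, pmfOf μ (fun ω => (X ω, Y ω)) (a, b) = pmfOf μ Y b := by
  simp only [pmfOf, Prod.mk.injEq, and_comm (a := X _ = _), ← filter_filter]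
  exact sum_fiberwise _ X μ

lemma pmfOf_comp [Fintype α] [DecidableEq α] [DecidableEq β] (X : Ω → α) (F : α → β) (b : β) :
    pmfOf μ (fun ω => F (X ω)) b = ∑ a with F a = b, pmfOf μ X a := by
  unfold pmfOf
  rw [← sum_fiberwise_of_maps_to (g := X) (t := univ.filter fun a => F a = b)
    (fun ω hω => by simpa using hω)]
  refine sum_congr rfl fun a ha => ?_
  rw [filter_filter]
  congr 1
  ext ω
  simp only [mem_filter, mem_univ, true_and] at ha ⊢
  constructor
  · exact fun h => h.2
  · rintro rfl; exact ⟨ha, rfl⟩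

end Pmf

section Independence

variable {Ω α β γ δ : Type} [Fintype Ω] {μ : Ω → ℝ} [Fintype α] [DecidableEq α]
  [Fintype β] [DecidableEq β] [Fintype γ] [DecidableEq γ] [Fintype δ] [DecidableEq δ]

lemma IndepRV.comp {X : Ω → α} {Y : Ω → β} (h : IndepRV μ X Y) (S : α → γ) (T : β → δ) :
    IndepRV μ (fun ω => S (X ω)) (fun ω => T (Y ω)) := fun c d => by
  rw [pmfOf_comp μ (fun ω => (X ω, Y ω)) (fun p => (S p.1, T p.2)), pmfOf_comp μ X,
    pmfOf_comp μ Y, sum_mul_sum, ← sum_product']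
  refine sum_congr ?_ fun p _ => h p.1 p.2
  ext p
  simp

lemma indepRV_of_pmfOf_eq_mul (hμ : ∑ ω, μ ω = 1) {X : Ω → α} {Y : Ω → β} (p : α → ℝ)
    (q : β → ℝ) (h : ∀ a b, pmfOf μ (fun ω => (X ω, Y ω)) (a, b) = p a * q b) :
    IndepRV μ X Y := by
  have hX : ∀ a, pmfOf μ X a = p a * ∑ b, q b := fun a => by
    rw [← sum_pmfOf_prod_right μ X Y, mul_sum]; exact sum_congr rfl fun b _ => h a b
  have hY : ∀ b, pmfOf μ Y b = (∑ a, p a) * q b := fun b => by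
    rw [← sum_pmfOf_prod_left μ X Y, sum_mul]; exact sum_congr rfl fun a _ => h a b
  have hpq : (∑ a, p a) * ∑ b, q b = 1 := by
    rw [← hμ, ← sum_pmfOf μ X, sum_mul]; exact sum_congr rfl fun a _ => (hX a).symm
  intro a b
  rw [h, hX, hY]
  linear_combination p a * q b * hpq.symm

end Independence

lemma Real.sub_le_mul_log_div {p q : ℝ} (hp : 0 ≤ p) (hq : 0 ≤ q) (hpq : 0 < p → 0 < q) :
    p - q ≤ p * Real.log (p / q) := by
  rcases hp.eq_or_lt with rfl | hp
  · simpa using hq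
  have h := Real.one_sub_inv_le_log_of_pos (div_pos hp (hpq hp))
  rw [inv_div] at h
  calc p - q = p * (1 - q / p) := by field_simp
    _ ≤ p * Real.log (p / q) := mul_le_mul_of_nonneg_left h hp.le

section Information

variable {Ω α β γ : Type} [Fintype Ω] (μ : Ω → ℝ) [Fintype α] [DecidableEq α]
  [Fintype β] [DecidableEq β] [Fintype γ] [DecidableEq γ]

lemma mi_comm (X : Ω → α) (Y : Ω → β) : mi μ X Y = mi μ Y X := by
  unfold mi
  rw [sum_comm]
  refine sum_congr rfl fun b _ => sum_congr rfl fun a _ => ?_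
  rw [pmfOf_swap, mul_comm (pmfOf μ Y b)]

lemma cmi_comm (X : Ω → α) (Y : Ω → β) (Z : Ω → γ) : cmi μ X Y Z = cmi μ Y X Z := by
  unfold cmi
  rw [sum_comm]
  refine sum_congr rfl fun b _ => sum_congr rfl fun a _ => sum_congr rfl fun c _ => ?_
  rw [pmfOf_congr μ (X := fun ω => (Y ω, X ω, Z ω)) (Y := fun ω => (X ω, Y ω, Z ω))
    (a := (b, a, c)) (b := (a, b, c)) fun ω => by simp only [Prod.mk.injEq]; tauto,
    mul_comm (pmfOf μ (fun ω => (Y ω, Z ω)) (b, c))]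

lemma cmi_nonneg (hμ : IsPMF μ) (X : Ω → α) (Y : Ω → β) (Z : Ω → γ) : 0 ≤ cmi μ X Y Z := by
  set P := pmfOf μ (fun ω => (X ω, Y ω, Z ω))
  set Pxz := pmfOf μ (fun ω => (X ω, Z ω))
  set Pyz := pmfOf μ (fun ω => (Y ω, Z ω))
  set Pz := pmfOf μ Z
  have hP : ∑ a, ∑ b, ∑ c, P (a, b, c) = 1 :=
    calc _ = ∑ a, pmfOf μ X a := sum_congr rfl fun a _ => by
          rw [← sum_pmfOf_prod_right μ X (fun ω => (Y ω, Z ω)), Fintype.sum_prod_type]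
      _ = 1 := by rw [sum_pmfOf, hμ.2]
  have hQ : ∑ a, ∑ b, ∑ c, Pxz (a, c) * Pyz (b, c) / Pz c = 1 :=
    calc _ = ∑ c, ∑ a, ∑ b, Pxz (a, c) * Pyz (b, c) / Pz c :=
          (sum_congr rfl fun a _ => sum_comm).trans sum_comm
      _ = ∑ c, Pz c := sum_congr rfl fun c _ => by
          simp only [← sum_div, ← sum_mul_sum, Pxz, Pyz, Pz, sum_pmfOf_prod_left,
            mul_self_div_self]
      _ = 1 := by rw [sum_pmfOf, hμ.2]
  have hpos : ∀ a b c, 0 < P (a, b, c) → 0 < Pxz (a, c) * Pyz (b, c) / Pz c := by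
    intro a b c h
    have hxz : 0 < Pxz (a, c) :=
      h.trans_le (pmfOf_le_pmfOf μ hμ.1 fun ω => by simp only [Prod.mk.injEq]; tauto)
    have hyz : 0 < Pyz (b, c) :=
      h.trans_le (pmfOf_le_pmfOf μ hμ.1 fun ω => by simp only [Prod.mk.injEq]; tauto)
    have hz : 0 < Pz c :=
      h.trans_le (pmfOf_le_pmfOf μ hμ.1 fun ω => by simp only [Prod.mk.injEq]; tauto)
    positivity
  -- Gibbs' inequality against the weight `Pxz * Pyz / Pz`, which also has total mass one.
  calc (0 : ℝ) = ∑ a, ∑ b, ∑ c, (P (a, b, c) - Pxz (a, c) * Pyz (b, c) / Pz c) := by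
        simp only [sum_sub_distrib, hP, hQ, sub_self]
    _ ≤ cmi μ X Y Z := by
        unfold cmi
        gcongr with a _ b _ c _
        have h := Real.sub_le_mul_log_div (pmfOf_nonneg μ hμ.1 _ _)
          (div_nonneg (mul_nonneg (pmfOf_nonneg μ hμ.1 _ _) (pmfOf_nonneg μ hμ.1 _ _))
            (pmfOf_nonneg μ hμ.1 _ _)) (hpos a b c)
        rwa [div_div_eq_mul_div] at h

lemma mi_prod_eq_mi_add_cmi (hμ : ∀ ω, 0 ≤ μ ω) (X : Ω → α) (Y : Ω → β) (Z : Ω → γ) :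
    mi μ X (fun ω => (Y ω, Z ω)) = mi μ X Z + cmi μ X Y Z := by
  set P := pmfOf μ (fun ω => (X ω, Y ω, Z ω))
  set Pxz := pmfOf μ (fun ω => (X ω, Z ω))
  set Pyz := pmfOf μ (fun ω => (Y ω, Z ω))
  have hmarg : ∀ a c, ∑ b, P (a, b, c) = Pxz (a, c) := fun a c =>
    .trans (sum_congr rfl fun b _ => pmfOf_congr μ fun ω => by simp only [Prod.mk.injEq]; tauto)
      (sum_pmfOf_prod_right μ (fun ω => (X ω, Z ω)) Y (a, c))
  have key : ∀ a b c, P (a, b, c) * Real.log (P (a, b, c) / (pmfOf μ X a * Pyz (b, c))) =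
      P (a, b, c) * Real.log (Pxz (a, c) / (pmfOf μ X a * pmfOf μ Z c)) +
        P (a, b, c) * Real.log (P (a, b, c) * pmfOf μ Z c / (Pxz (a, c) * Pyz (b, c))) := by
    intro a b c
    rcases (pmfOf_nonneg μ hμ (fun ω => (X ω, Y ω, Z ω)) (a, b, c)).eq_or_lt with h | h
    · simp only [P, ← h, zero_mul, add_zero]
    have hx : 0 < pmfOf μ X a :=
      h.trans_le (pmfOf_le_pmfOf μ hμ fun ω => by simp only [Prod.mk.injEq]; tauto)
    have hz : 0 < pmfOf μ Z c :=
      h.trans_le (pmfOf_le_pmfOf μ hμ fun ω => by simp only [Prod.mk.injEq]; tauto)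
    have hxz : 0 < Pxz (a, c) :=
      h.trans_le (pmfOf_le_pmfOf μ hμ fun ω => by simp only [Prod.mk.injEq]; tauto)
    have hyz : 0 < Pyz (b, c) :=
      h.trans_le (pmfOf_le_pmfOf μ hμ fun ω => by simp only [Prod.mk.injEq]; tauto)
    rw [← mul_add, ← Real.log_mul (by positivity) (by positivity)]
    congr 2
    field_simp
  calc mi μ X (fun ω => (Y ω, Z ω))
      = ∑ a, ∑ b, ∑ c, P (a, b, c) * Real.log (P (a, b, c) / (pmfOf μ X a * Pyz (b, c))) :=
        sum_congr rfl fun a _ => Fintype.sum_prod_type _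
    _ = ∑ a, ∑ b, ∑ c, (P (a, b, c) * Real.log (Pxz (a, c) / (pmfOf μ X a * pmfOf μ Z c)) +
        P (a, b, c) * Real.log (P (a, b, c) * pmfOf μ Z c / (Pxz (a, c) * Pyz (b, c)))) := by
        simp only [key]
    _ = mi μ X Z + cmi μ X Y Z := by
        simp only [sum_add_distrib]
        congr 1
        refine sum_congr rfl fun a _ => ?_
        rw [sum_comm]
        exact sum_congr rfl fun c _ => by rw [← sum_mul, hmarg]

lemma mi_comp_of_injective (X : Ω → α) (Y : Ω → β) {ψ : β → γ} (hψ : Function.Injective ψ) :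
    mi μ X (fun ω => ψ (Y ω)) = mi μ X Y := by
  unfold mi
  refine sum_congr rfl fun a _ => (Fintype.sum_of_injective ψ hψ _ _ ?_ fun b => ?_).symm
  · intro c hc
    have : pmfOf μ (fun ω => (X ω, ψ (Y ω))) (a, c) = 0 := sum_eq_zero fun ω hω =>
      absurd ⟨Y ω, (by simpa using hω : X ω = a ∧ ψ (Y ω) = c).2⟩ hc
    rw [this, zero_mul]
  · rw [pmfOf_congr μ (X := fun ω => (X ω, ψ (Y ω))) (Y := fun ω => (X ω, Y ω))
      (a := (a, ψ b)) (b := (a, b)) fun ω => by simp only [Prod.mk.injEq, hψ.eq_iff],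
      pmfOf_congr μ (X := fun ω => ψ (Y ω)) (Y := Y) (a := ψ b) (b := b) fun ω => hψ.eq_iff]

lemma mi_comp_le (hμ : IsPMF μ) (X : Ω → α) (Y : Ω → β) (h : β → γ) :
    mi μ X (fun ω => h (Y ω)) ≤ mi μ X Y :=
  calc mi μ X (fun ω => h (Y ω))
      ≤ mi μ X (fun ω => h (Y ω)) + cmi μ X Y (fun ω => h (Y ω)) :=
        le_add_of_nonneg_right (cmi_nonneg μ hμ X Y _)
    _ = mi μ X (fun ω => (Y ω, h (Y ω))) := (mi_prod_eq_mi_add_cmi μ hμ.1 X Y _).symm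
    _ = mi μ X Y :=
        mi_comp_of_injective μ X Y (ψ := fun b => (b, h b)) fun _ _ => congrArg Prod.fst

lemma mi_prod_of_indepRV (hμ : ∑ ω, μ ω = 1) (X : Ω → α) (Y : Ω → β) (W : Ω → γ)
    (h : IndepRV μ (fun ω => (X ω, Y ω)) W) :
    mi μ X (fun ω => (Y ω, W ω)) = mi μ X Y := by
  have hP : ∀ a b w, pmfOf μ (fun ω => (X ω, Y ω, W ω)) (a, b, w) =
      pmfOf μ (fun ω => (X ω, Y ω)) (a, b) * pmfOf μ W w := fun a b w =>
    .trans (pmfOf_congr μ fun ω => by simp only [Prod.mk.injEq, and_assoc]) (h (a, b) w)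
  have key : ∀ a b w, pmfOf μ (fun ω => (X ω, Y ω, W ω)) (a, b, w) *
      Real.log (pmfOf μ (fun ω => (X ω, Y ω, W ω)) (a, b, w) /
        (pmfOf μ X a * pmfOf μ (fun ω => (Y ω, W ω)) (b, w))) =
      pmfOf μ W w * (pmfOf μ (fun ω => (X ω, Y ω)) (a, b) *
        Real.log (pmfOf μ (fun ω => (X ω, Y ω)) (a, b) / (pmfOf μ X a * pmfOf μ Y b))) := by
    intro a b w
    have hYW : IndepRV μ Y W := h.comp Prod.snd id
    rw [hP, hYW b w]
    rcases eq_or_ne (pmfOf μ W w) 0 with hw | hw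
    · simp [hw]
    · rw [← mul_assoc, mul_div_mul_comm, div_self hw, mul_one]
      ring
  unfold mi
  refine sum_congr rfl fun a _ => ?_
  rw [Fintype.sum_prod_type]
  refine sum_congr rfl fun b _ => ?_
  simp only [key, ← sum_mul, sum_pmfOf, hμ, one_mul]

end Information

section NoisyChannel

variable {Ω α β γ δ κ : Type} [Fintype Ω] (μ : Ω → ℝ) [Fintype α] [DecidableEq α]
  [Fintype β] [DecidableEq β] [Fintype γ] [DecidableEq γ] [Fintype δ] [DecidableEq δ]
  [Fintype κ] [DecidableEq κ]

lemma mi_noisy_comp_le (hμ : IsPMF μ) (X : Ω → α) (Y : Ω → β) (N : Ω → κ) (h : β → κ → γ)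
    (hN : IndepRV μ (fun ω => (X ω, Y ω)) N) :
    mi μ X (fun ω => h (Y ω) (N ω)) ≤ mi μ X Y :=
  (mi_comp_le μ hμ X (fun ω => (Y ω, N ω)) fun p => h p.1 p.2).trans_eq
    (mi_prod_of_indepRV μ hμ.2 X Y N hN)

lemma mi_eq_mi_noisy_comp_add_cmi (hμ : IsPMF μ) (X : Ω → α) (Y : Ω → β) (N : Ω → κ)
    (h : β → κ → γ) (hN : IndepRV μ (fun ω => (X ω, Y ω)) N) :
    mi μ X Y = mi μ X (fun ω => h (Y ω) (N ω)) + cmi μ X Y (fun ω => h (Y ω) (N ω)) := by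
  rw [← mi_prod_eq_mi_add_cmi μ hμ.1]
  exact le_antisymm (mi_comp_le μ hμ X (fun ω => (Y ω, h (Y ω) (N ω))) Prod.fst)
    (mi_noisy_comp_le μ hμ X Y N (fun y n => (y, h y n)) hN)

lemma cmi_noisy_comp_le (hμ : IsPMF μ) (X : Ω → α) (Y : Ω → β) (Z : Ω → γ) (N : Ω → κ)
    (h : β → κ → δ) (hN : IndepRV μ (fun ω => (X ω, Y ω, Z ω)) N) :
    cmi μ X (fun ω => h (Y ω) (N ω)) Z ≤ cmi μ X Y Z := by
  have hle : mi μ X (fun ω => (h (Y ω) (N ω), Z ω)) ≤ mi μ X (fun ω => (Y ω, Z ω)) :=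
    mi_noisy_comp_le μ hμ X (fun ω => (Y ω, Z ω)) N (fun p n => (h p.1 n, p.2)) hN
  rw [mi_prod_eq_mi_add_cmi μ hμ.1, mi_prod_eq_mi_add_cmi μ hμ.1] at hle
  linarith

lemma indepRV_of_pmfOf_eq_mul₄ (hμ : ∑ ω, μ ω = 1) {N₁ : Ω → α} {N₂ : Ω → β} {N₃ : Ω → γ}
    {V : Ω → κ}
    (h : ∀ e₁ e₂ e₃ v, pmfOf μ (fun ω => (N₁ ω, N₂ ω, N₃ ω, V ω)) (e₁, e₂, e₃, v) =
      pmfOf μ N₁ e₁ * pmfOf μ N₂ e₂ * pmfOf μ N₃ e₃ * pmfOf μ V v) :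
    IndepRV μ (fun ω => (N₂ ω, N₃ ω, V ω)) N₁ ∧ IndepRV μ (fun ω => (N₁ ω, N₃ ω, V ω)) N₂ ∧
      IndepRV μ (fun ω => (N₁ ω, N₂ ω, V ω)) N₃ := by
  refine ⟨indepRV_of_pmfOf_eq_mul hμ
      (fun r => pmfOf μ N₂ r.1 * pmfOf μ N₃ r.2.1 * pmfOf μ V r.2.2) (pmfOf μ N₁) ?_,
    indepRV_of_pmfOf_eq_mul hμ
      (fun r => pmfOf μ N₁ r.1 * pmfOf μ N₃ r.2.1 * pmfOf μ V r.2.2) (pmfOf μ N₂) ?_,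
    indepRV_of_pmfOf_eq_mul hμ
      (fun r => pmfOf μ N₁ r.1 * pmfOf μ N₂ r.2.1 * pmfOf μ V r.2.2) (pmfOf μ N₃) ?_⟩
  · rintro ⟨e₂, e₃, v⟩ e₁
    exact (pmfOf_congr μ (Y := fun ω => (N₁ ω, N₂ ω, N₃ ω, V ω)) (b := (e₁, e₂, e₃, v))
      fun ω => by simp only [Prod.mk.injEq]; tauto).trans ((h e₁ e₂ e₃ v).trans (by ring))
  · rintro ⟨e₁, e₃, v⟩ e₂
    exact (pmfOf_congr μ (Y := fun ω => (N₁ ω, N₂ ω, N₃ ω, V ω)) (b := (e₁, e₂, e₃, v))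
      fun ω => by simp only [Prod.mk.injEq]; tauto).trans ((h e₁ e₂ e₃ v).trans (by ring))
  · rintro ⟨e₁, e₂, v⟩ e₃
    exact (pmfOf_congr μ (Y := fun ω => (N₁ ω, N₂ ω, N₃ ω, V ω)) (b := (e₁, e₂, e₃, v))
      fun ω => by simp only [Prod.mk.injEq]; tauto).trans ((h e₁ e₂ e₃ v).trans (by ring))

end NoisyChannel

/-- **Insufficiency implies a strictly positive autoinformation gap**: if for some noisy
function `y_{t+τ} = f(x_{t+τ}, ε₃)` the representation `z_t = g(x_t, ε₁)` is not sufficient,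
i.e. `I(x_t; y_{t+τ}) > I(z_t; y_{t+τ})`, then the autoinformation gap is strictly positive:
`I(x_t; x_{t+τ}) > I(z_t; z_{t+τ})`, where `z_{t+τ} = g(x_{t+τ}, ε₂)` is obtained with the
same noisy encoding function and all noise variables are mutually independent and
independent of the process. -/
theorem autoinfo_gap_pos_of_insufficiency {Ω A E E' Z B : Type} [Fintype Ω]
    [Fintype A] [DecidableEq A] [Fintype E] [DecidableEq E] [Fintype E'] [DecidableEq E']
    [Fintype Z] [DecidableEq Z] [Fintype B] [DecidableEq B]
    (μ : Ω → ℝ) (hμ : IsPMF μ)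
    (x x' : Ω → A) (ε₁ ε₂ : Ω → E) (ε₃ : Ω → E')
    (g : A → E → Z) (f : A → E' → B)
    (hIndep : ∀ (e₁ e₂ : E) (e₃ : E') (a a' : A),
      pmfOf μ (fun ω => (ε₁ ω, ε₂ ω, ε₃ ω, x ω, x' ω)) (e₁, e₂, e₃, a, a')
        = pmfOf μ ε₁ e₁ * pmfOf μ ε₂ e₂ * pmfOf μ ε₃ e₃
          * pmfOf μ (fun ω => (x ω, x' ω)) (a, a'))
    (hInsuff : mi μ x (fun ω => f (x' ω) (ε₃ ω))
      > mi μ (fun ω => g (x ω) (ε₁ ω)) (fun ω => f (x' ω) (ε₃ ω))) :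
    mi μ x x' > mi μ (fun ω => g (x ω) (ε₁ ω)) (fun ω => g (x' ω) (ε₂ ω)) := by
  obtain ⟨h₁, h₂, h₃⟩ := indepRV_of_pmfOf_eq_mul₄ μ hμ.2 (V := fun ω => (x ω, x' ω))
    fun e₁ e₂ e₃ v => hIndep e₁ e₂ e₃ v.1 v.2
  set z := fun ω => g (x ω) (ε₁ ω)
  set y := fun ω => f (x' ω) (ε₃ ω)
  have hx : mi μ x' x = mi μ x' z + cmi μ x' x z :=
    mi_eq_mi_noisy_comp_add_cmi μ hμ x' x ε₁ g (h₁.comp (fun v => (v.2.2.2, v.2.2.1)) id)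
  have hy : mi μ y x = mi μ y z + cmi μ y x z :=
    mi_eq_mi_noisy_comp_add_cmi μ hμ y x ε₁ g
      (h₁.comp (fun v => (f v.2.2.2 v.2.1, v.2.2.1)) id)
  have hzz : mi μ z (fun ω => g (x' ω) (ε₂ ω)) ≤ mi μ z x' :=
    mi_noisy_comp_le μ hμ z x' ε₂ g (h₂.comp (fun v => (g v.2.2.1 v.1, v.2.2.2)) id)
  have hcmi : cmi μ x y z ≤ cmi μ x x' z :=
    cmi_noisy_comp_le μ hμ x x' z ε₃ f
      (h₃.comp (fun v => (v.2.2.1, v.2.2.2, g v.2.2.1 v.1)) id)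
  rw [mi_comm μ x', mi_comm μ x' z, cmi_comm] at hx
  rw [mi_comm μ y, mi_comm μ y z, cmi_comm] at hy
  linarith
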